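/- Existence of an admissible three-soliton configuration for fast rates: for every ν > 8, defining f : (0,1) → ℝ by f(z) = ((1+z)^{ν/2}/(2z))·(1−z²)^{(2−ν)/4} and g : (0,1) → ℝ by g(z) = (8/ν)·f(z)² − ν/4 − f(2z/(1+z²)), there exists z ∈ (0,1) such that g(z) = 0. (g is continuous, g(z) → +∞ as z → 0⁺, and g(z) → −∞ as z → 1⁻ because the coefficient 8/ν − 1 is negative for ν > 8.) -/

import Mathlib

/-!
Near `0`, `f(z) = P(z) / (2z)` with `P` continuous and `P(0) = 1`, so `g(z) ≈ 2 / (ν z²) → +∞`.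
Near `1`, the relative speed `w = 2z/(1+z²)` satisfies `1 - w² = ((1 - z²)/(1 + z²))²`, so
`f(z)²` and `f(w)` carry the same blow-up factor `(1 - z²)^((2-ν)/2)`, whose coefficient tends
to `2^(ν-2) (8/ν - 1) < 0`. Hence `g → -∞` at `1⁻`, and the intermediate value theorem gives a
zero.
-/

open Set Filter Topology

noncomputable section

/-- The interaction coefficient
`f(z) = ((1+z)^{ν/2}/(2z)) (1-z²)^{(2-ν)/4} = ((1+|z|)^{ν/2}/(2|z|)) γ_z^{ν/2-1}`. -/
def fadm (ν z : ℝ) : ℝ := ((1 + z) ^ (ν / 2) / (2 * z)) * (1 - z ^ 2) ^ ((2 - ν) / 4)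

/-- The admissibility function for the symmetric three-soliton configuration with
velocities `(-z,0,0)`, `(0,0,0)`, `(z,0,0)`:
`g(z) = (8/ν) f(z)² - ν/4 - f(2z/(1+z²))`, where `2z/(1+z²)` is the relativistic
relative speed of the two outer solitons. -/
def gadm (ν z : ℝ) : ℝ :=
  (8 / ν) * fadm ν z ^ 2 - ν / 4 - fadm ν (2 * z / (1 + z ^ 2))

theorem surjOn_Ioo_of_tendsto_atTop_of_tendsto_atBot {α δ : Type*}
    [ConditionallyCompleteLinearOrder α] [TopologicalSpace α] [OrderTopology α]
    [DenselyOrdered α] [LinearOrder δ] [TopologicalSpace δ] [OrderClosedTopology δ]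
    {a b : α} (hab : a < b) {f : α → δ} (hf : ContinuousOn f (Ioo a b))
    (ha : Tendsto f (𝓝[>] a) atTop) (hb : Tendsto f (𝓝[<] b) atBot) :
    SurjOn f (Ioo a b) univ := by
  have := left_nhdsWithin_Ioo_neBot hab
  have := right_nhdsWithin_Ioo_neBot hab
  rw [← nhdsWithin_Ioo_eq_nhdsGT hab] at ha
  rw [← nhdsWithin_Ioo_eq_nhdsLT hab] at hb
  exact isPreconnected_Ioo.intermediate_value_Iii (l₁ := 𝓝[Ioo a b] b) (l₂ := 𝓝[Ioo a b] a)
    inf_le_right inf_le_right hf hb ha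

theorem continuous_two_mul_div_one_add_sq : Continuous fun z : ℝ => 2 * z / (1 + z ^ 2) :=
  (continuous_const.mul continuous_id).div (by fun_prop) fun _ => by positivity

theorem two_mul_div_one_add_sq_mem_Ioo {z : ℝ} (hz : z ∈ Ioo (0 : ℝ) 1) :
    2 * z / (1 + z ^ 2) ∈ Ioo (0 : ℝ) 1 := by
  obtain ⟨h0, h1⟩ := hz
  refine ⟨by positivity, (div_lt_one (by positivity)).2 ?_⟩
  nlinarith [sq_pos_of_pos (sub_pos.2 h1)]

theorem one_sub_sq_two_mul_div_one_add_sq (z : ℝ) :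
    1 - (2 * z / (1 + z ^ 2)) ^ 2 = ((1 - z ^ 2) / (1 + z ^ 2)) ^ 2 := by
  field_simp
  ring

def fadmNumer (ν z : ℝ) : ℝ := (1 + z) ^ (ν / 2) * (1 - z ^ 2) ^ ((2 - ν) / 4)

theorem fadm_eq_fadmNumer_div (ν z : ℝ) : fadm ν z = fadmNumer ν z / (2 * z) := by
  rw [fadm, fadmNumer, div_mul_eq_mul_div]

theorem continuousAt_fadmNumer (ν : ℝ) {z : ℝ} (hz : z ∈ Ioo (-1 : ℝ) 1) :
    ContinuousAt (fadmNumer ν) z := by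
  obtain ⟨h0, h1⟩ := hz
  have : 0 < 1 - z ^ 2 := by nlinarith
  exact ((continuousAt_const.add continuousAt_id).rpow_const (Or.inl (by simp; linarith))).mul
    ((continuousAt_const.sub (continuousAt_id.pow 2)).rpow_const (Or.inl this.ne'))

theorem fadmNumer_zero (ν : ℝ) : fadmNumer ν 0 = 1 := by
  simp [fadmNumer]

theorem continuousOn_gadm (ν : ℝ) : ContinuousOn (gadm ν) (Ioo 0 1) := by
  have hf : ContinuousOn (fadm ν) (Ioo 0 1) := by
    intro z hz
    rw [funext (fadm_eq_fadmNumer_div ν)]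
    exact ((continuousAt_fadmNumer ν ⟨by linarith [hz.1], hz.2⟩).div (by fun_prop)
      (by linarith [hz.1])).continuousWithinAt
  exact ((continuousOn_const.mul (hf.pow 2)).sub continuousOn_const).sub
    (hf.comp continuous_two_mul_div_one_add_sq.continuousOn
      fun _ hz => two_mul_div_one_add_sq_mem_Ioo hz)

theorem gadm_eq_of_ne_zero (ν : ℝ) {z : ℝ} (hz : z ≠ 0) :
    gadm ν z = z⁻¹ * (z⁻¹ * (2 / ν * fadmNumer ν z ^ 2)
      - fadmNumer ν (2 * z / (1 + z ^ 2)) * (1 + z ^ 2) / 4) - ν / 4 := by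
  have : 1 + z ^ 2 ≠ 0 := by positivity
  rw [gadm, fadm_eq_fadmNumer_div, fadm_eq_fadmNumer_div, show 8 / ν = 4 * (2 / ν) by ring]
  generalize 2 / ν = c
  field_simp
  ring

theorem tendsto_gadm_nhdsGT_zero {ν : ℝ} (hν : 0 < ν) : Tendsto (gadm ν) (𝓝[>] 0) atTop := by
  have hP : ContinuousAt (fadmNumer ν) 0 := continuousAt_fadmNumer ν ⟨by norm_num, by norm_num⟩
  have hc : Tendsto (fun z => 2 / ν * fadmNumer ν z ^ 2) (𝓝[>] 0) (𝓝 (2 / ν)) := by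
    have : ContinuousAt (fun z => 2 / ν * fadmNumer ν z ^ 2) 0 := continuousAt_const.mul (hP.pow 2)
    simpa [fadmNumer_zero] using this.tendsto.mono_left nhdsWithin_le_nhds
  have hd : Tendsto (fun z => fadmNumer ν (2 * z / (1 + z ^ 2)) * (1 + z ^ 2) / 4) (𝓝[>] 0)
      (𝓝 (1 / 4)) := by
    have : ContinuousAt (fun z => fadmNumer ν (2 * z / (1 + z ^ 2)) * (1 + z ^ 2) / 4) 0 :=
      ((hP.comp_of_eq continuous_two_mul_div_one_add_sq.continuousAt (by simp)).mul
        (by fun_prop)).div_const 4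
    simpa [fadmNumer_zero] using this.tendsto.mono_left nhdsWithin_le_nhds
  have hinv : Tendsto (fun z : ℝ => z⁻¹) (𝓝[>] 0) atTop := tendsto_inv_nhdsGT_zero
  have key := tendsto_atTop_add_const_right _ (-(ν / 4))
    (hinv.atTop_mul_atTop₀ ((hinv.atTop_mul_pos (by positivity) hc).atTop_add hd.neg))
  refine key.congr' ?_
  filter_upwards [self_mem_nhdsWithin] with z (hz : 0 < z)
  simp only [gadm_eq_of_ne_zero ν hz.ne', sub_eq_add_neg]

theorem rpow_one_sub_sq_two_mul_div_one_add_sq {z : ℝ} (hz : z ^ 2 ≤ 1) (p : ℝ) :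
    (1 - (2 * z / (1 + z ^ 2)) ^ 2) ^ p = ((1 - z ^ 2) ^ p) ^ 2 / ((1 + z ^ 2) ^ p) ^ 2 := by
  have h1 : 0 ≤ 1 - z ^ 2 := by linarith
  have h2 : 0 ≤ 1 + z ^ 2 := by positivity
  rw [one_sub_sq_two_mul_div_one_add_sq, ← Real.rpow_pow_comm (div_nonneg h1 h2),
    Real.div_rpow h1 h2, div_pow]

theorem tendsto_one_sub_sq_nhdsLT_one : Tendsto (fun z : ℝ => 1 - z ^ 2) (𝓝[<] 1) (𝓝[>] 0) := by
  refine tendsto_nhdsWithin_iff.2 ⟨?_, ?_⟩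
  · have : ContinuousAt (fun z : ℝ => 1 - z ^ 2) 1 := by fun_prop
    simpa using this.tendsto.mono_left nhdsWithin_le_nhds
  · filter_upwards [Ioo_mem_nhdsLT (zero_lt_one' ℝ)] with z ⟨h0, h1⟩
    show 0 < 1 - z ^ 2
    nlinarith

def fadmPrefactor (ν z : ℝ) : ℝ := (1 + z) ^ (ν / 2) / (2 * z)

def gadmLeadingCoeff (ν z : ℝ) : ℝ :=
  8 / ν * fadmPrefactor ν z ^ 2
    - fadmPrefactor ν (2 * z / (1 + z ^ 2)) / ((1 + z ^ 2) ^ ((2 - ν) / 4)) ^ 2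

theorem fadm_eq_fadmPrefactor_mul (ν z : ℝ) :
    fadm ν z = fadmPrefactor ν z * (1 - z ^ 2) ^ ((2 - ν) / 4) :=
  rfl

theorem gadm_eq_gadmLeadingCoeff_mul {ν z : ℝ} (hz : z ^ 2 ≤ 1) :
    gadm ν z = gadmLeadingCoeff ν z * ((1 - z ^ 2) ^ ((2 - ν) / 4)) ^ 2 - ν / 4 := by
  rw [gadm, fadm_eq_fadmPrefactor_mul, fadm_eq_fadmPrefactor_mul,
    rpow_one_sub_sq_two_mul_div_one_add_sq hz, gadmLeadingCoeff]
  ring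

theorem continuousAt_fadmPrefactor (ν : ℝ) {z : ℝ} (hz : 0 < z) :
    ContinuousAt (fadmPrefactor ν) z :=
  ((continuousAt_const.add continuousAt_id).rpow_const (Or.inl (by simp; linarith))).div
    (by fun_prop) (by positivity)

theorem continuousAt_gadmLeadingCoeff_one (ν : ℝ) : ContinuousAt (gadmLeadingCoeff ν) 1 := by
  have hQ := continuousAt_fadmPrefactor ν one_pos
  exact (continuousAt_const.mul (hQ.pow 2)).sub
    ((hQ.comp_of_eq continuous_two_mul_div_one_add_sq.continuousAt (by norm_num)).div
      (((continuousAt_const.add (continuousAt_id.pow 2)).rpow_const (Or.inl (by simp))).pow 2)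
      (by positivity))

theorem gadmLeadingCoeff_one (ν : ℝ) :
    gadmLeadingCoeff ν 1 = ((2 : ℝ) ^ (ν / 2) / 2) ^ 2 * (8 / ν - 1) := by
  have h : ((2 : ℝ) ^ ((2 - ν) / 4)) ^ 2 = 2 / 2 ^ (ν / 2) := by
    rw [← Real.rpow_mul_natCast zero_le_two, show (2 - ν) / 4 * ((2 : ℕ) : ℝ) = 1 - ν / 2 by
      push_cast; ring, Real.rpow_sub two_pos, Real.rpow_one]
  have : (0 : ℝ) < 2 ^ (ν / 2) := by positivity
  norm_num [gadmLeadingCoeff, fadmPrefactor, h]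
  field_simp

theorem tendsto_gadm_nhdsLT_one {ν : ℝ} (hν : 8 < ν) : Tendsto (gadm ν) (𝓝[<] 1) atBot := by
  have hneg : gadmLeadingCoeff ν 1 < 0 := by
    rw [gadmLeadingCoeff_one]
    have : 8 / ν < 1 := (div_lt_one (by linarith)).2 hν
    exact mul_neg_of_pos_of_neg (by positivity) (by linarith)
  have hD := (continuousAt_gadmLeadingCoeff_one ν).tendsto.mono_left
    (nhdsWithin_le_nhds (s := Iio 1))
  have hE : Tendsto (fun z : ℝ => ((1 - z ^ 2) ^ ((2 - ν) / 4)) ^ 2) (𝓝[<] 1) atTop :=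
    (tendsto_pow_atTop two_ne_zero).comp
      ((tendsto_rpow_neg_nhdsGT_zero (by linarith)).comp tendsto_one_sub_sq_nhdsLT_one)
  refine (tendsto_atBot_add_const_right _ (-(ν / 4)) (hD.neg_mul_atTop hneg hE)).congr' ?_
  filter_upwards [Ioo_mem_nhdsLT (zero_lt_one' ℝ)] with z ⟨h0, h1⟩
  rw [gadm_eq_gadmLeadingCoeff_mul (by nlinarith)]
  ring

/-- Existence of an admissible three-soliton configuration for fast rates: for every
`ν > 8` there is `z ∈ (0,1)` with `g(z) = 0`. -/
theorem stmt16 (ν : ℝ) (hν : 8 < ν) :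
    ∃ z ∈ Ioo (0 : ℝ) 1, gadm ν z = 0 :=
  surjOn_Ioo_of_tendsto_atTop_of_tendsto_atBot zero_lt_one (continuousOn_gadm ν)
    (tendsto_gadm_nhdsGT_zero (by linarith)) (tendsto_gadm_nhdsLT_one hν) (mem_univ 0)

end
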